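/- arXiv:1009.1262 — 4 statements merged into one kernel-verified Lean document; each statement's English description precedes it below -/
import Mathlib

section
/- Let U ⊆ ℝ² be open and connected, invariant under the reflection σ(x, y) = (x, −y), and suppose U contains at least one point of the x-axis. If u is harmonic on U and u(x, 0) = 0 for every point (x, 0) ∈ U, then u(x, −y) = −u(x, y) for every (x, y) ∈ U. -/
/-!
Put `v z = u z + u (conj z)` on the complex plane: `v` is harmonic, even in `y`, and vanishes on
the real points of `U`. Hence both partial derivatives of `v` vanish there (`∂ₓv` because `v` is
zero along the axis, `∂ᵧv` by evenness), so the holomorphic function `∂ₓv - i ∂ᵧv` vanishes on a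
real interval and, by the identity theorem, on all of the connected set `U`. Thus `v` is locally
constant, hence zero, on `U`.
-/

/-- Partial derivative with respect to the first variable. -/
noncomputable def pdx (u : ℝ × ℝ → ℝ) (p : ℝ × ℝ) : ℝ :=
  deriv (fun x : ℝ => u (x, p.2)) p.1

/-- Partial derivative with respect to the second variable. -/
noncomputable def pdy (u : ℝ × ℝ → ℝ) (p : ℝ × ℝ) : ℝ :=
  deriv (fun y : ℝ => u (p.1, y)) p.2

open InnerProductSpace Laplacian Topology Filter Complex ComplexConjugate Set

namespace InnerProductSpace

variable {E F : Type*} [NormedAddCommGroup E] [InnerProductSpace ℝ E] [FiniteDimensional ℝ E]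
  [NormedAddCommGroup F] [NormedSpace ℝ F]

theorem laplacian_comp_linearIsometryEquiv (f : E → F) (g : E ≃ₗᵢ[ℝ] E) (x : E) :
    Δ (f ∘ g) x = Δ f (g x) := by
  let b := stdOrthonormalBasis ℝ E
  have hg : iteratedFDeriv ℝ 2 (f ∘ g) x =
      (iteratedFDeriv ℝ 2 f (g x)).compContinuousLinearMap fun _ => (g : E →L[ℝ] E) := by
    simpa [iteratedFDerivWithin_univ] using
      g.toContinuousLinearEquiv.iteratedFDerivWithin_comp_right f uniqueDiffOn_univ
        (mem_univ (g x)) 2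
  rw [laplacian_eq_iteratedFDeriv_orthonormalBasis _ b,
    laplacian_eq_iteratedFDeriv_orthonormalBasis f (b.map g)]
  simp only [hg]
  refine Finset.sum_congr rfl fun i _ => ?_
  simp only [ContinuousMultilinearMap.compContinuousLinearMap_apply]
  congr 1
  ext j
  fin_cases j <;> simp

theorem HarmonicAt.comp_linearIsometryEquiv {f : E → F} {g : E ≃ₗᵢ[ℝ] E} {x : E}
    (h : HarmonicAt f (g x)) : HarmonicAt (f ∘ g) x := by
  refine ⟨h.1.comp x g.contDiff.contDiffAt, ?_⟩
  filter_upwards [(g.continuous.tendsto x).eventually h.2] with y hy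
  rwa [Pi.zero_apply, laplacian_comp_linearIsometryEquiv]

end InnerProductSpace

theorem deriv_deriv_comp_add_smul {E F : Type*} [NormedAddCommGroup E] [NormedSpace ℝ E]
    [NormedAddCommGroup F] [NormedSpace ℝ F] {f : E → F} {a v : E} {t : ℝ}
    (hf : ContDiffAt ℝ 2 f (a + t • v)) :
    deriv (deriv fun s : ℝ => f (a + s • v)) t = fderiv ℝ (fderiv ℝ f) (a + t • v) v v := by
  have hline : ∀ s : ℝ, HasDerivAt (fun s : ℝ => a + s • v) v s := fun s => by
    simpa using ((hasDerivAt_id s).smul_const v).const_add a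
  have hfd : deriv (fun s : ℝ => f (a + s • v)) =ᶠ[𝓝 t] fun s => fderiv ℝ f (a + s • v) v := by
    filter_upwards [(hline t).continuousAt.eventually (hf.eventually (by norm_num))] with s hs
    exact ((hs.differentiableAt (by norm_num)).hasFDerivAt.comp_hasDerivAt s (hline s)).deriv
  have hf' : DifferentiableAt ℝ (fderiv ℝ f) (a + t • v) :=
    (hf.fderiv_right (m := 1) le_rfl).differentiableAt one_ne_zero
  have hfd' : HasDerivAt (fun s : ℝ => fderiv ℝ f (a + s • v))
      (fderiv ℝ (fderiv ℝ f) (a + t • v) v) t :=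
    hf'.hasFDerivAt.comp_hasDerivAt t (hline t)
  rw [hfd.deriv_eq]
  simpa using (hfd'.clm_apply (hasDerivAt_const t v)).deriv

theorem Complex.realCLM_ext {F : Type*} [AddCommGroup F] [Module ℝ F] [TopologicalSpace F]
    {L M : ℂ →L[ℝ] F} (h1 : L 1 = M 1) (hI : L I = M I) : L = M :=
  ContinuousLinearMap.coe_injective (basisOneI.ext fun i => by fin_cases i <;> simpa)

theorem fderiv_ofReal_eq_zero_of_conj_invariant {f : ℂ → ℝ} (hconj : ∀ z, f (conj z) = f z)
    {x : ℝ} (hx : ∀ᶠ t : ℝ in 𝓝 x, f t = 0) (hf : DifferentiableAt ℝ f x) :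
    fderiv ℝ f x = 0 := by
  set L := fderiv ℝ f x
  have hI : L I = 0 := by
    have h : HasFDerivAt (f ∘ conjCLE) (L.comp (conjCLE : ℂ →L[ℝ] ℂ)) x :=
      (by simpa using hf.hasFDerivAt : HasFDerivAt f L (conjCLE (x : ℂ))).comp _
        conjCLE.hasFDerivAt
    rw [show f ∘ conjCLE = f from funext hconj] at h
    have hL := DFunLike.congr_fun (h.unique hf.hasFDerivAt) I
    simp only [ContinuousLinearMap.comp_apply, ContinuousLinearEquiv.coe_coe,
      ContinuousAlgEquiv.coeCLE_apply, conjCAE_apply, conj_I, map_neg] at hL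
    linarith
  have h1 : L 1 = 0 := by
    have h : HasFDerivAt (f ∘ ofRealCLM) (L.comp ofRealCLM) x :=
      hf.hasFDerivAt.comp x ofRealCLM.hasFDerivAt
    have h0 : HasFDerivAt (f ∘ ofRealCLM) (0 : ℝ →L[ℝ] ℝ) x :=
      (hasFDerivAt_const 0 x).congr_of_eventuallyEq hx
    simpa using DFunLike.congr_fun (h.unique h0) 1
  exact Complex.realCLM_ext (by simpa using h1) (by simpa using hI)

namespace InnerProductSpace.HarmonicOnNhd

variable {f : ℂ → ℝ} {Ω : Set ℂ}

theorem eqOn_zero_of_conj_invariant (hf : HarmonicOnNhd f Ω) (hΩ : IsOpen Ω)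
    (hconn : IsPreconnected Ω) (hconj : ∀ z, f (conj z) = f z) {x₀ : ℝ} (hx₀ : (x₀ : ℂ) ∈ Ω)
    (hreal : ∀ x : ℝ, (x : ℂ) ∈ Ω → f x = 0) : EqOn f 0 Ω := by
  have hdiff : DifferentiableOn ℝ f Ω := hf.contDiffOn.differentiableOn (by norm_num)
  have hreal_nhds : ∀ x : ℝ, (x : ℂ) ∈ Ω → ∀ᶠ t : ℝ in 𝓝 x, (t : ℂ) ∈ Ω := fun x hx =>
    continuous_ofReal.continuousAt.preimage_mem_nhds (hΩ.mem_nhds hx)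
  have hd_real : ∀ x : ℝ, (x : ℂ) ∈ Ω → fderiv ℝ f x = 0 := fun x hx =>
    fderiv_ofReal_eq_zero_of_conj_invariant hconj ((hreal_nhds x hx).mono hreal)
      (hdiff.differentiableAt (hΩ.mem_nhds hx))
  -- `∂ₓf - i ∂ᵧf`, holomorphic by the Cauchy–Riemann equations for harmonic `f`
  set g : ℂ → ℂ := fun z => fderiv ℝ f z 1 - I * fderiv ℝ f z I
  have hg_real : ∃ᶠ z in 𝓝[≠] (x₀ : ℂ), g z = 0 := by
    have hofReal : Tendsto ((↑) : ℝ → ℂ) (𝓝[≠] x₀) (𝓝[≠] (x₀ : ℂ)) :=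
      continuous_ofReal.continuousWithinAt.tendsto_nhdsWithin fun _ h => by simpa using h
    refine hofReal.frequently (eventually_nhdsWithin_of_eventually_nhds
      ((hreal_nhds x₀ hx₀).mono fun x hx => ?_)).frequently
    simp [g, hd_real x hx]
  have hg : EqOn g 0 Ω :=
    AnalyticOnNhd.eqOn_zero_of_preconnected_of_frequently_eq_zero
      (fun z hz => HarmonicAt.analyticAt_complex_partial (hf z hz)) hconn hx₀ hg_real
  have hd : EqOn (fderiv ℝ f) 0 Ω := fun z hz => by
    have hgz := hg hz
    simp only [g, Pi.zero_apply, Complex.ext_iff, sub_re, ofReal_re, mul_re, I_re, zero_mul, I_im,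
      ofReal_im, mul_zero, sub_self, sub_zero, zero_re, sub_im, mul_im, one_mul, zero_add,
      zero_sub, zero_im, neg_eq_zero] at hgz
    exact Complex.realCLM_ext (by simpa using hgz.1) (by simpa using hgz.2)
  intro z hz
  rw [hΩ.is_const_of_fderiv_eq_zero hconn hdiff hd hz hx₀, hreal x₀ hx₀, Pi.zero_apply]

theorem comp_conj_eq_neg (hf : HarmonicOnNhd f Ω) (hΩ : IsOpen Ω) (hconn : IsPreconnected Ω)
    (hΩconj : ∀ z ∈ Ω, conj z ∈ Ω) {x₀ : ℝ} (hx₀ : (x₀ : ℂ) ∈ Ω)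
    (hreal : ∀ x : ℝ, (x : ℂ) ∈ Ω → f x = 0) : ∀ z ∈ Ω, f (conj z) = -f z := by
  have hv : HarmonicOnNhd (f ∘ conjLIE + f) Ω :=
    HarmonicOnNhd.add (fun z hz => (hf _ (hΩconj z hz)).comp_linearIsometryEquiv) hf
  have hv0 := hv.eqOn_zero_of_conj_invariant hΩ hconn (fun z => by simp [add_comm]) hx₀
    (fun x hx => by simp [hreal x hx])
  intro z hz
  have hvz := hv0 hz
  simp only [Pi.add_apply, Function.comp_apply, conjLIE_apply, Pi.zero_apply] at hvz
  linarith

end InnerProductSpace.HarmonicOnNhd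

theorem pdx_pdx_eq_fderiv_fderiv_comp {u : ℝ × ℝ → ℝ} {z : ℂ}
    (hu : ContDiffAt ℝ 2 (u ∘ equivRealProdCLM) z) :
    pdx (pdx u) (equivRealProdCLM z) = fderiv ℝ (fderiv ℝ (u ∘ equivRealProdCLM)) z 1 1 := by
  have hz : (z.im : ℂ) * I + z.re • (1 : ℂ) = z := by simp [add_comm]
  have hline : (fun t : ℝ => u (t, z.im)) =
      fun t => (u ∘ equivRealProdCLM) (z.im * I + t • 1) := by
    ext t; simp
  have h := deriv_deriv_comp_add_smul (f := u ∘ equivRealProdCLM) (hz ▸ hu)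
  rwa [hz, ← hline] at h

theorem pdy_pdy_eq_fderiv_fderiv_comp {u : ℝ × ℝ → ℝ} {z : ℂ}
    (hu : ContDiffAt ℝ 2 (u ∘ equivRealProdCLM) z) :
    pdy (pdy u) (equivRealProdCLM z) = fderiv ℝ (fderiv ℝ (u ∘ equivRealProdCLM)) z I I := by
  have hz : (z.re : ℂ) + z.im • I = z := by simp
  have hline : (fun t : ℝ => u (z.re, t)) = fun t => (u ∘ equivRealProdCLM) (z.re + t • I) := by
    ext t; simp
  have h := deriv_deriv_comp_add_smul (f := u ∘ equivRealProdCLM) (hz ▸ hu)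
  rwa [hz, ← hline] at h

theorem harmonicOnNhd_comp_equivRealProdCLM {u : ℝ × ℝ → ℝ} {U : Set (ℝ × ℝ)} (hU : IsOpen U)
    (hu : ContDiffOn ℝ 2 u U) (hΔ : ∀ p ∈ U, pdx (pdx u) p + pdy (pdy u) p = 0) :
    HarmonicOnNhd (u ∘ equivRealProdCLM) (equivRealProdCLM ⁻¹' U) := by
  have hsmooth : ∀ z ∈ equivRealProdCLM ⁻¹' U, ContDiffAt ℝ 2 (u ∘ equivRealProdCLM) z :=
    fun z hz => (hu.contDiffAt (hU.mem_nhds hz)).comp z equivRealProdCLM.contDiff.contDiffAt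
  refine fun z hz => ⟨hsmooth z hz, ?_⟩
  filter_upwards [(hU.preimage equivRealProdCLM.continuous).mem_nhds hz] with w hw
  rw [laplacian_eq_iteratedFDeriv_complexPlane]
  simp only [iteratedFDeriv_two_apply, Matrix.cons_val_zero, Matrix.cons_val_one, Pi.zero_apply]
  rw [← pdx_pdx_eq_fderiv_fderiv_comp (hsmooth w hw),
    ← pdy_pdy_eq_fderiv_fderiv_comp (hsmooth w hw)]
  exact hΔ _ hw

/-- Schwarz reflection principle across the line `y = 0`. -/
theorem schwarz_reflection_line
    (U : Set (ℝ × ℝ)) (hUopen : IsOpen U) (hUconn : IsConnected U)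
    (hUsym : (fun p : ℝ × ℝ => (p.1, -p.2)) '' U = U)
    (hUaxis : ∃ x : ℝ, (x, (0 : ℝ)) ∈ U)
    (u : ℝ × ℝ → ℝ) (hu : ContDiffOn ℝ 2 u U)
    (hharm : ∀ p ∈ U, pdx (pdx u) p + pdy (pdy u) p = 0)
    (hzero : ∀ x : ℝ, (x, (0 : ℝ)) ∈ U → u (x, 0) = 0) :
    ∀ p ∈ U, u (p.1, -p.2) = -u p := by
  obtain ⟨x₀, hx₀⟩ := hUaxis
  set e : ℂ ≃L[ℝ] ℝ × ℝ := equivRealProdCLM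
  have hσ : ∀ p ∈ U, (p.1, -p.2) ∈ U := fun p hp => hUsym ▸ mem_image_of_mem _ hp
  have hΩconj : ∀ z ∈ e ⁻¹' U, conj z ∈ e ⁻¹' U := fun z hz => by simpa [e] using hσ _ hz
  have hreflect := (harmonicOnNhd_comp_equivRealProdCLM hUopen hu hharm).comp_conj_eq_neg
    (hUopen.preimage e.continuous) (e.toHomeomorph.isPreconnected_preimage.2 hUconn.isPreconnected)
    hΩconj (x₀ := x₀) (by simpa [e] using hx₀)
    (fun x hx => by simpa [e] using hzero x (by simpa [e] using hx))
  intro p hp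
  simpa [e] using hreflect (e.symm p) (by simpa [e] using hp)
end

section
/- Let a, b, c : ℝ² → ℝ be C¹ functions, let ℜ be a Riemann function for the hyperbolic operator H, let s : ℝ → ℝ be a C¹ strictly decreasing bijection with graph Γ = {(x, s(x)) : x ∈ ℝ}, and let u : ℝ² → ℝ be a C² solution of Hu = u_{xy} + a uₓ + b u_y + c u = 0 on ℝ². Then for every point P = (x₀, y₀) ∈ ℝ², setting M = (s⁻¹(y₀), y₀) and N = (x₀, s(x₀)), one has u(P) = ½ u(M) ℜ(M; P) + ½ u(N) ℜ(N; P) − ∫_{s⁻¹(y₀)}^{x₀} [𝔘(x, s(x)) · s′(x) − 𝔙(x, s(x))] dx, where 𝔘(x, y) = a(x,y) u(x,y) ℜ(x,y; x₀,y₀) + ½[ℜ(x,y; x₀,y₀) u_y(x,y) − ℜ_y(x,y; x₀,y₀) u(x,y)] and 𝔙(x, y) = b(x,y) u(x,y) ℜ(x,y; x₀,y₀) + ½[ℜ(x,y; x₀,y₀) uₓ(x,y) − ℜₓ(x,y; x₀,y₀) u(x,y)]. -/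
open MeasureTheory Set intervalIntegral Function

section PartialDerivatives

variable {f : ℝ × ℝ → ℝ} {p : ℝ × ℝ}

theorem hasDerivAt_pdx (hf : DifferentiableAt ℝ f p) :
    HasDerivAt (fun x => f (x, p.2)) (pdx f p) p.1 :=
  (hf.comp p.1 (differentiableAt_id.prodMk (differentiableAt_const p.2))).hasDerivAt

theorem hasDerivAt_pdy (hf : DifferentiableAt ℝ f p) :
    HasDerivAt (fun y => f (p.1, y)) (pdy f p) p.2 :=
  (hf.comp p.2 ((differentiableAt_const p.1).prodMk differentiableAt_id)).hasDerivAt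

theorem pdx_eq_fderiv (hf : DifferentiableAt ℝ f p) : pdx f p = fderiv ℝ f p (1, 0) :=
  (hf.hasFDerivAt.comp_hasDerivAt p.1
    ((hasDerivAt_id p.1).prodMk (hasDerivAt_const p.1 p.2))).deriv

theorem pdy_eq_fderiv (hf : DifferentiableAt ℝ f p) : pdy f p = fderiv ℝ f p (0, 1) :=
  (hf.hasFDerivAt.comp_hasDerivAt p.2
    ((hasDerivAt_const p.2 p.1).prodMk (hasDerivAt_id p.2))).deriv

variable {m n : WithTop ℕ∞}

theorem contDiff_pdx (hf : ContDiff ℝ n f) (hmn : m + 1 ≤ n) : ContDiff ℝ m (pdx f) := by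
  have hd : Differentiable ℝ f := hf.differentiable (by rintro rfl; simp at hmn)
  rw [show pdx f = fun q => fderiv ℝ f q (1, 0) from funext fun q => pdx_eq_fderiv (hd q)]
  exact (hf.fderiv_right hmn).clm_apply contDiff_const

theorem contDiff_pdy (hf : ContDiff ℝ n f) (hmn : m + 1 ≤ n) : ContDiff ℝ m (pdy f) := by
  have hd : Differentiable ℝ f := hf.differentiable (by rintro rfl; simp at hmn)
  rw [show pdy f = fun q => fderiv ℝ f q (0, 1) from funext fun q => pdy_eq_fderiv (hd q)]
  exact (hf.fderiv_right hmn).clm_apply contDiff_const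

theorem differentiable_pdx (hf : ContDiff ℝ 2 f) : Differentiable ℝ (pdx f) :=
  (contDiff_pdx hf (m := 1) le_rfl).differentiable one_ne_zero

theorem differentiable_pdy (hf : ContDiff ℝ 2 f) : Differentiable ℝ (pdy f) :=
  (contDiff_pdy hf (m := 1) le_rfl).differentiable one_ne_zero

theorem pdx_pdy_comm (hf : ContDiff ℝ 2 f) (p : ℝ × ℝ) : pdx (pdy f) p = pdy (pdx f) p := by
  have hd : Differentiable ℝ f := hf.differentiable (by norm_num)
  have hd2 : DifferentiableAt ℝ (fderiv ℝ f) p :=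
    (hf.fderiv_right (m := 1) le_rfl).differentiable one_ne_zero p
  have hslice (v : ℝ × ℝ) :
      HasFDerivAt (fun q => fderiv ℝ f q v) ((fderiv ℝ (fderiv ℝ f) p).flip v) p :=
    hd2.hasFDerivAt.clm_apply (hasFDerivAt_const v p) |>.congr_fderiv (by ext <;> simp)
  rw [show pdy f = fun q => fderiv ℝ f q (0, 1) from funext fun q => pdy_eq_fderiv (hd q),
    show pdx f = fun q => fderiv ℝ f q (1, 0) from funext fun q => pdx_eq_fderiv (hd q),
    pdx_eq_fderiv (hslice _).differentiableAt, pdy_eq_fderiv (hslice _).differentiableAt,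
    (hslice _).fderiv, (hslice _).fderiv]
  exact (hf.contDiffAt.isSymmSndFDerivAt (by simp)) _ _

end PartialDerivatives

theorem integral_integral_triangle_swap_of_le {f : ℝ → ℝ → ℝ} (hf : Continuous (uncurry f))
    {a b : ℝ} (hab : a ≤ b) :
    ∫ x in a..b, ∫ t in a..x, f x t = ∫ t in a..b, ∫ x in t..b, f x t := by
  set F : ℝ → ℝ → ℝ := fun x t => if t ≤ x then f x t else 0
  have hF : Integrable (uncurry F)
      ((volume.restrict (Ioc a b)).prod (volume.restrict (Ioc a b))) := by
    rw [Measure.prod_restrict, ← Measure.volume_eq_prod]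
    have : IntegrableOn (uncurry f) (Icc a b ×ˢ Icc a b) :=
      hf.continuousOn.integrableOn_compact (isCompact_Icc.prod isCompact_Icc)
    exact (this.mono_set (prod_mono Ioc_subset_Icc_self Ioc_subset_Icc_self)).indicator
      (measurableSet_le measurable_snd measurable_fst)
  have inner_x : ∀ x ∈ Ioc a b, ∫ t in Ioc a b, F x t = ∫ t in a..x, f x t := by
    intro x hx
    have hI : Ioc a x = Ioc a b ∩ Iic x := by rw [Ioc_inter_Iic, min_eq_right hx.2]
    rw [integral_of_le hx.1.le, hI, ← setIntegral_indicator measurableSet_Iic]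
    rfl
  have inner_t : ∀ t ∈ Ioc a b, ∫ x in Ioc a b, F x t = ∫ x in t..b, f x t := by
    intro t ht
    have hI : Icc t b = Ioc a b ∩ Ici t := by
      ext x; simp only [mem_inter_iff, mem_Ioc, mem_Ici, mem_Icc]
      constructor
      · rintro ⟨h, h'⟩; exact ⟨⟨ht.1.trans_le h, h'⟩, h⟩
      · rintro ⟨⟨-, h⟩, h'⟩; exact ⟨h', h⟩
    rw [integral_of_le ht.2, ← integral_Icc_eq_integral_Ioc (x := t), hI,
      ← setIntegral_indicator measurableSet_Ici]
    rfl
  rw [integral_of_le hab, integral_of_le hab, ← setIntegral_congr_fun measurableSet_Ioc inner_x,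
    ← setIntegral_congr_fun measurableSet_Ioc inner_t]
  exact integral_integral_swap hF

theorem integral_integral_triangle_swap {f : ℝ → ℝ → ℝ} (hf : Continuous (uncurry f))
    (a b : ℝ) :
    ∫ x in a..b, ∫ t in a..x, f x t = ∫ t in a..b, ∫ x in t..b, f x t := by
  rcases le_total a b with hab | hba
  · exact integral_integral_triangle_swap_of_le hf hab
  · have h := integral_integral_triangle_swap_of_le (f := fun x t => f t x)
      (hf.comp continuous_swap) hba
    have hx : ∀ x, ∫ t in a..x, f x t = -∫ t in x..a, f x t := fun x => integral_symm _ _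
    have ht : ∀ t, ∫ x in t..b, f x t = -∫ x in b..t, f x t := fun t => integral_symm _ _
    simp only [hx, ht, intervalIntegral.integral_neg, neg_inj]
    rw [integral_symm b a, integral_symm b a, h]

theorem integral_graph_flux_eq_of_pdx_add_pdy_eq_zero {U V : ℝ × ℝ → ℝ}
    (hU : ContDiff ℝ 1 U) (hV : ContDiff ℝ 1 V) (hdiv : ∀ q, pdx U q + pdy V q = 0)
    {s : ℝ → ℝ} (hs : ContDiff ℝ 1 s) (m x₀ : ℝ) :
    ∫ x in m..x₀, (U (x, s x) * deriv s x - V (x, s x))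
      = (∫ y in s m..s x₀, U (x₀, y)) - ∫ x in m..x₀, V (x, s m) := by
  have cU : Continuous U := hU.continuous
  have cV : Continuous V := hV.continuous
  have cUx : Continuous (pdx U) := (contDiff_pdx hU (m := 0) (by norm_num)).continuous
  have cs : Continuous s := hs.continuous
  have cs' : Continuous (deriv s) := hs.continuous_deriv le_rfl
  have hsd (t : ℝ) : HasDerivAt s (deriv s t) t := (hs.differentiable one_ne_zero t).hasDerivAt
  have inner (x : ℝ) :
      ∫ t in m..x, pdx U (x, s t) * deriv s t = V (x, s m) - V (x, s x) := by
    rw [← neg_sub_neg]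
    refine integral_eq_sub_of_hasDerivAt (f := fun t => -V (x, s t)) (fun t _ => ?_)
      ((by fun_prop : Continuous fun t => pdx U (x, s t) * deriv s t).intervalIntegrable _ _)
    have h := ((hasDerivAt_pdy (hV.differentiable one_ne_zero (x, s t))).comp t (hsd t)).neg
    rwa [← neg_mul, ← eq_neg_of_add_eq_zero_left (hdiv (x, s t))] at h
  have outer (t : ℝ) :
      ∫ x in t..x₀, pdx U (x, s t) * deriv s t
        = U (x₀, s t) * deriv s t - U (t, s t) * deriv s t :=
    integral_eq_sub_of_hasDerivAt (f := fun x => U (x, s t) * deriv s t)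
      (fun x _ => (hasDerivAt_pdx (hU.differentiable one_ne_zero (x, s t))).mul_const _)
      ((by fun_prop : Continuous fun x => pdx U (x, s t) * deriv s t).intervalIntegrable _ _)
  have hV_diff : ∫ x in m..x₀, (V (x, s m) - V (x, s x))
      = ∫ t in m..x₀, (U (x₀, s t) * deriv s t - U (t, s t) * deriv s t) := by
    -- Fubini on the triangle with vertices `(m, s m)`, `(x₀, s m)`, `(x₀, s x₀)`, in the
    -- coordinates `(x, t)` where the point is `(x, s t)`.
    calc ∫ x in m..x₀, (V (x, s m) - V (x, s x))
        = ∫ x in m..x₀, ∫ t in m..x, pdx U (x, s t) * deriv s t :=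
          integral_congr fun x _ => (inner x).symm
      _ = ∫ t in m..x₀, ∫ x in t..x₀, pdx U (x, s t) * deriv s t :=
          integral_integral_triangle_swap (f := fun x t => pdx U (x, s t) * deriv s t)
            (by fun_prop) m x₀
      _ = _ := integral_congr fun t _ => outer t
  have hsubst : ∫ t in m..x₀, U (x₀, s t) * deriv s t = ∫ y in s m..s x₀, U (x₀, y) :=
    integral_comp_mul_deriv (g := fun y => U (x₀, y)) (fun t _ => hsd t) cs'.continuousOn
      (by fun_prop)
  have hint {g : ℝ → ℝ} (hg : Continuous g) : IntervalIntegrable g volume m x₀ :=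
    hg.intervalIntegrable m x₀
  rw [integral_sub (hint (by fun_prop)) (hint (by fun_prop)),
    integral_sub (hint (by fun_prop)) (hint (by fun_prop)), hsubst] at hV_diff
  rw [integral_sub (hint (by fun_prop)) (hint (by fun_prop))]
  linarith

noncomputable def hyperbolicOp (a b c u : ℝ × ℝ → ℝ) (q : ℝ × ℝ) : ℝ :=
  pdy (pdx u) q + a q * pdx u q + b q * pdy u q + c q * u q

noncomputable def adjointHyperbolicOp (a b c v : ℝ × ℝ → ℝ) (q : ℝ × ℝ) : ℝ :=
  pdy (pdx v) q - pdx (fun q' => a q' * v q') q - pdy (fun q' => b q' * v q') q + c q * v q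

/-- `fluxU a u v` and `fluxV b u v` are the paper's `𝔘` and `𝔙` with `v` in place of `ℜ(·; P)`. -/
noncomputable def fluxU (a u v : ℝ × ℝ → ℝ) (p : ℝ × ℝ) : ℝ :=
  a p * u p * v p + (1 / 2) * (v p * pdy u p - pdy v p * u p)

noncomputable def fluxV (b u v : ℝ × ℝ → ℝ) (p : ℝ × ℝ) : ℝ :=
  b p * u p * v p + (1 / 2) * (v p * pdx u p - pdx v p * u p)

section Flux

variable {a b u v : ℝ × ℝ → ℝ}

theorem contDiff_fluxU (ha : ContDiff ℝ 1 a) (hu : ContDiff ℝ 2 u) (hv : ContDiff ℝ 2 v) :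
    ContDiff ℝ 1 (fluxU a u v) := by
  have := contDiff_pdy hu (m := 1) le_rfl
  have := contDiff_pdy hv (m := 1) le_rfl
  have := hu.of_le one_le_two
  have := hv.of_le one_le_two
  unfold fluxU
  fun_prop

theorem contDiff_fluxV (hb : ContDiff ℝ 1 b) (hu : ContDiff ℝ 2 u) (hv : ContDiff ℝ 2 v) :
    ContDiff ℝ 1 (fluxV b u v) := by
  have := contDiff_pdx hu (m := 1) le_rfl
  have := contDiff_pdx hv (m := 1) le_rfl
  have := hu.of_le one_le_two
  have := hv.of_le one_le_two
  unfold fluxV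
  fun_prop

theorem pdx_fluxU_add_pdy_fluxV (c : ℝ × ℝ → ℝ) {q : ℝ × ℝ} (ha : DifferentiableAt ℝ a q)
    (hb : DifferentiableAt ℝ b q) (hu : ContDiff ℝ 2 u) (hv : ContDiff ℝ 2 v) :
    pdx (fluxU a u v) q + pdy (fluxV b u v) q
      = v q * hyperbolicOp a b c u q - u q * adjointHyperbolicOp a b c v q := by
  have du : DifferentiableAt ℝ u q := hu.differentiable (by norm_num) q
  have dv : DifferentiableAt ℝ v q := hv.differentiable (by norm_num) q
  have dux : DifferentiableAt ℝ (pdx u) q := differentiable_pdx hu q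
  have duy : DifferentiableAt ℝ (pdy u) q := differentiable_pdy hu q
  have dvx : DifferentiableAt ℝ (pdx v) q := differentiable_pdx hv q
  have dvy : DifferentiableAt ℝ (pdy v) q := differentiable_pdy hv q
  have hU : pdx (fluxU a u v) q
      = (pdx a q * u q + a q * pdx u q) * v q + a q * u q * pdx v q
        + (1 / 2) * ((pdx v q * pdy u q + v q * pdx (pdy u) q)
          - (pdx (pdy v) q * u q + pdy v q * pdx u q)) :=
    ((((hasDerivAt_pdx ha).mul (hasDerivAt_pdx du)).mul (hasDerivAt_pdx dv)).add
      ((((hasDerivAt_pdx dv).mul (hasDerivAt_pdx duy)).sub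
        ((hasDerivAt_pdx dvy).mul (hasDerivAt_pdx du))).const_mul (1 / 2))).deriv
  have hV : pdy (fluxV b u v) q
      = (pdy b q * u q + b q * pdy u q) * v q + b q * u q * pdy v q
        + (1 / 2) * ((pdy v q * pdx u q + v q * pdy (pdx u) q)
          - (pdy (pdx v) q * u q + pdx v q * pdy u q)) :=
    ((((hasDerivAt_pdy hb).mul (hasDerivAt_pdy du)).mul (hasDerivAt_pdy dv)).add
      ((((hasDerivAt_pdy dv).mul (hasDerivAt_pdy dux)).sub
        ((hasDerivAt_pdy dvx).mul (hasDerivAt_pdy du))).const_mul (1 / 2))).deriv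
  have hav : pdx (fun q' => a q' * v q') q = pdx a q * v q + a q * pdx v q :=
    ((hasDerivAt_pdx ha).mul (hasDerivAt_pdx dv)).deriv
  have hbv : pdy (fun q' => b q' * v q') q = pdy b q * v q + b q * pdy v q :=
    ((hasDerivAt_pdy hb).mul (hasDerivAt_pdy dv)).deriv
  rw [hU, hV, pdx_pdy_comm hu, pdx_pdy_comm hv, hyperbolicOp, adjointHyperbolicOp, hav, hbv]
  ring

theorem integral_fluxU_eq_of_pdy_eq {x : ℝ} (hu : Differentiable ℝ u) (hv : Differentiable ℝ v)
    (hU : Continuous (fluxU a u v)) (hvy : ∀ y, pdy v (x, y) = a (x, y) * v (x, y)) (y₁ y₂ : ℝ) :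
    ∫ y in y₁..y₂, fluxU a u v (x, y) = u (x, y₂) * v (x, y₂) / 2 - u (x, y₁) * v (x, y₁) / 2 := by
  have hderiv (y : ℝ) :
      HasDerivAt (fun y' => u (x, y') * v (x, y') / 2) (fluxU a u v (x, y)) y := by
    have h : HasDerivAt (fun y' => u (x, y') * v (x, y') / 2)
        ((pdy u (x, y) * v (x, y) + u (x, y) * pdy v (x, y)) / 2) y :=
      ((hasDerivAt_pdy (hu (x, y))).mul (hasDerivAt_pdy (hv (x, y)))).div_const 2
    convert h using 1
    rw [fluxU, hvy]
    ring
  exact integral_eq_sub_of_hasDerivAt (fun y _ => hderiv y)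
    ((hU.comp (by fun_prop)).intervalIntegrable _ _)

theorem integral_fluxV_eq_of_pdx_eq {y : ℝ} (hu : Differentiable ℝ u) (hv : Differentiable ℝ v)
    (hV : Continuous (fluxV b u v)) (hvx : ∀ x, pdx v (x, y) = b (x, y) * v (x, y)) (x₁ x₂ : ℝ) :
    ∫ x in x₁..x₂, fluxV b u v (x, y) = u (x₂, y) * v (x₂, y) / 2 - u (x₁, y) * v (x₁, y) / 2 := by
  have hderiv (x : ℝ) :
      HasDerivAt (fun x' => u (x', y) * v (x', y) / 2) (fluxV b u v (x, y)) x := by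
    have h : HasDerivAt (fun x' => u (x', y) * v (x', y) / 2)
        ((pdx u (x, y) * v (x, y) + u (x, y) * pdx v (x, y)) / 2) x :=
      ((hasDerivAt_pdx (hu (x, y))).mul (hasDerivAt_pdx (hv (x, y)))).div_const 2
    convert h using 1
    rw [fluxV, hvx]
    ring
  exact integral_eq_sub_of_hasDerivAt (fun x _ => hderiv x)
    ((hV.comp (by fun_prop)).intervalIntegrable _ _)

end Flux

theorem pdy_eq_mul_of_eq_exp_integral {a v : ℝ × ℝ → ℝ} (ha : Continuous a) {x₀ y₀ : ℝ}
    (hv : ∀ y, v (x₀, y) = Real.exp (∫ τ in y₀..y, a (x₀, τ))) (y : ℝ) :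
    pdy v (x₀, y) = a (x₀, y) * v (x₀, y) := by
  have h : HasDerivAt (fun y' => v (x₀, y')) (a (x₀, y) * v (x₀, y)) y := by
    rw [funext hv, hv, mul_comm]
    exact ((by fun_prop : Continuous fun τ => a (x₀, τ)).integral_hasStrictDerivAt
      y₀ y).hasDerivAt.exp
  exact h.deriv

theorem pdx_eq_mul_of_eq_exp_integral {b v : ℝ × ℝ → ℝ} (hb : Continuous b) {x₀ y₀ : ℝ}
    (hv : ∀ x, v (x, y₀) = Real.exp (∫ t in x₀..x, b (t, y₀))) (x : ℝ) :
    pdx v (x, y₀) = b (x, y₀) * v (x, y₀) := by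
  have h : HasDerivAt (fun x' => v (x', y₀)) (b (x, y₀) * v (x, y₀)) x := by
    rw [funext hv, hv, mul_comm]
    exact ((by fun_prop : Continuous fun t => b (t, y₀)).integral_hasStrictDerivAt
      x₀ x).hasDerivAt.exp
  exact h.deriv

theorem riemann_representation_general
    (a b c : ℝ × ℝ → ℝ)
    (ha : ContDiff ℝ 1 a) (hb : ContDiff ℝ 1 b)
    (R : ℝ × ℝ → ℝ × ℝ → ℝ)
    (hRsmooth : ∀ P : ℝ × ℝ, ContDiff ℝ 2 (fun q => R q P))
    -- (i) the adjoint equation `H* ℜ = 0` in the variables `q = (x, y)`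
    (hRadj : ∀ P q : ℝ × ℝ,
      pdy (pdx (fun q' => R q' P)) q
        - pdx (fun q' => a q' * R q' P) q
        - pdy (fun q' => b q' * R q' P) q
        + c q * R q P = 0)
    -- (ii) Goursat data on the vertical characteristic `x = x₀`
    (hRvert : ∀ P : ℝ × ℝ, ∀ y : ℝ,
      R (P.1, y) P = Real.exp (∫ τ in P.2..y, a (P.1, τ)))
    -- (iii) Goursat data on the horizontal characteristic `y = y₀`
    (hRhoriz : ∀ P : ℝ × ℝ, ∀ x : ℝ,
      R (x, P.2) P = Real.exp (∫ t in P.1..x, b (t, P.2)))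
    (s : ℝ → ℝ) (hs : ContDiff ℝ 1 s)
    (hsbij : Function.Bijective s)
    (u : ℝ × ℝ → ℝ) (hu : ContDiff ℝ 2 u)
    (hueq : ∀ q : ℝ × ℝ,
      pdy (pdx u) q + a q * pdx u q + b q * pdy u q + c q * u q = 0) :
    ∀ x₀ y₀ : ℝ,
      u (x₀, y₀) =
        (1 / 2) * u (Function.invFun s y₀, y₀) * R (Function.invFun s y₀, y₀) (x₀, y₀)
        + (1 / 2) * u (x₀, s x₀) * R (x₀, s x₀) (x₀, y₀)
        - ∫ x in (Function.invFun s y₀)..x₀,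
            ((a (x, s x) * u (x, s x) * R (x, s x) (x₀, y₀)
                + (1 / 2) * (R (x, s x) (x₀, y₀) * pdy u (x, s x)
                    - pdy (fun q => R q (x₀, y₀)) (x, s x) * u (x, s x))) * deriv s x
              - (b (x, s x) * u (x, s x) * R (x, s x) (x₀, y₀)
                + (1 / 2) * (R (x, s x) (x₀, y₀) * pdx u (x, s x)
                    - pdx (fun q => R q (x₀, y₀)) (x, s x) * u (x, s x)))) := by
  intro x₀ y₀
  set m := Function.invFun s y₀
  set v : ℝ × ℝ → ℝ := fun q => R q (x₀, y₀)
  have hm : s m = y₀ := Function.invFun_eq (hsbij.surjective y₀)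
  have hv : ContDiff ℝ 2 v := hRsmooth (x₀, y₀)
  have du : Differentiable ℝ u := hu.differentiable (by norm_num)
  have dv : Differentiable ℝ v := hv.differentiable (by norm_num)
  have hdiv (q : ℝ × ℝ) : pdx (fluxU a u v) q + pdy (fluxV b u v) q = 0 := by
    rw [pdx_fluxU_add_pdy_fluxV c (ha.differentiable one_ne_zero q)
      (hb.differentiable one_ne_zero q) hu hv, hyperbolicOp, adjointHyperbolicOp, hueq q,
      hRadj (x₀, y₀) q, mul_zero, mul_zero, sub_zero]
  have hcurve := integral_graph_flux_eq_of_pdx_add_pdy_eq_zero (contDiff_fluxU ha hu hv)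
    (contDiff_fluxV hb hu hv) hdiv hs m x₀
  have hvert := integral_fluxU_eq_of_pdy_eq du dv (contDiff_fluxU ha hu hv).continuous
    (pdy_eq_mul_of_eq_exp_integral ha.continuous (hRvert (x₀, y₀))) y₀ (s x₀)
  have hhoriz := integral_fluxV_eq_of_pdx_eq du dv (contDiff_fluxV hb hu hv).continuous
    (pdx_eq_mul_of_eq_exp_integral hb.continuous (hRhoriz (x₀, y₀))) m x₀
  have hvP : v (x₀, y₀) = 1 := by simp [v, hRvert (x₀, y₀) y₀]
  rw [hm, hvert, hhoriz, hvP] at hcurve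
  show u (x₀, y₀) = (1 / 2) * u (m, y₀) * v (m, y₀) + (1 / 2) * u (x₀, s x₀) * v (x₀, s x₀)
    - ∫ x in m..x₀, (fluxU a u v (x, s x) * deriv s x - fluxV b u v (x, s x))
  linarith

/-- Riemann's representation formula (Riemann's lemma) for solutions of the hyperbolic
equation `u_{xy} + a u_x + b u_y + c u = 0` in terms of data on the non-characteristic
curve `Γ = {(x, s(x))}`.  Here `R q P` is the Riemann function `ℜ(q; P)` of `H`. -/
theorem riemann_representation
    (a b c : ℝ × ℝ → ℝ)
    (ha : ContDiff ℝ 1 a) (hb : ContDiff ℝ 1 b) (hc : ContDiff ℝ 1 c)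
    (R : ℝ × ℝ → ℝ × ℝ → ℝ)
    (hRsmooth : ∀ P : ℝ × ℝ, ContDiff ℝ 2 (fun q => R q P))
    -- (i) the adjoint equation `H* ℜ = 0` in the variables `q = (x, y)`
    (hRadj : ∀ P q : ℝ × ℝ,
      pdy (pdx (fun q' => R q' P)) q
        - pdx (fun q' => a q' * R q' P) q
        - pdy (fun q' => b q' * R q' P) q
        + c q * R q P = 0)
    -- (ii) Goursat data on the vertical characteristic `x = x₀`
    (hRvert : ∀ P : ℝ × ℝ, ∀ y : ℝ,
      R (P.1, y) P = Real.exp (∫ τ in P.2..y, a (P.1, τ)))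
    -- (iii) Goursat data on the horizontal characteristic `y = y₀`
    (hRhoriz : ∀ P : ℝ × ℝ, ∀ x : ℝ,
      R (x, P.2) P = Real.exp (∫ t in P.1..x, b (t, P.2)))
    (s : ℝ → ℝ) (hs : ContDiff ℝ 1 s) (hsdec : StrictAnti s)
    (hsbij : Function.Bijective s)
    (u : ℝ × ℝ → ℝ) (hu : ContDiff ℝ 2 u)
    (hueq : ∀ q : ℝ × ℝ,
      pdy (pdx u) q + a q * pdx u q + b q * pdy u q + c q * u q = 0) :
    ∀ x₀ y₀ : ℝ,
      u (x₀, y₀) =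
        (1 / 2) * u (Function.invFun s y₀, y₀) * R (Function.invFun s y₀, y₀) (x₀, y₀)
        + (1 / 2) * u (x₀, s x₀) * R (x₀, s x₀) (x₀, y₀)
        - ∫ x in (Function.invFun s y₀)..x₀,
            ((a (x, s x) * u (x, s x) * R (x, s x) (x₀, y₀)
                + (1 / 2) * (R (x, s x) (x₀, y₀) * pdy u (x, s x)
                    - pdy (fun q => R q (x₀, y₀)) (x, s x) * u (x, s x))) * deriv s x
              - (b (x, s x) * u (x, s x) * R (x, s x) (x₀, y₀)
                + (1 / 2) * (R (x, s x) (x₀, y₀) * pdx u (x, s x)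
                    - pdx (fun q => R q (x₀, y₀)) (x, s x) * u (x, s x)))) :=
  riemann_representation_general a b c ha hb R hRsmooth hRadj hRvert hRhoriz s hs hsbij u hu hueq
end

section
/- Let s : ℝ → ℝ be a bijection and let u : ℝ² → ℝ be a C² function with mixed partial derivative ∂²u/∂x∂y = 0 at every point of ℝ² and with u(x, s(x)) = 0 for all x ∈ ℝ. Then for every (x₀, y₀) ∈ ℝ², every integer m ≥ 1, and every finite sequence t₀, t₁, …, t_m of real numbers satisfying s(t₀) = y₀ and t_m = x₀, one has u(x₀, y₀) = −Σ_{k=1}^{m} u(t_{k−1}, s(t_k)). -/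
theorem hasDerivAt_pdy_s6 {u : ℝ × ℝ → ℝ} (hu : Differentiable ℝ u) (p : ℝ × ℝ) :
    HasDerivAt (fun y => u (p.1, y)) (fderiv ℝ u p (0, 1)) p.2 :=
  (hu p).hasFDerivAt.comp_hasDerivAt p.2 ((hasDerivAt_const _ _).prodMk (hasDerivAt_id _))

theorem differentiable_pdy_left {u : ℝ × ℝ → ℝ} (hu : ContDiff ℝ 2 u) (y : ℝ) :
    Differentiable ℝ fun x => pdy u (x, y) := by
  have hfderiv : Differentiable ℝ fun p => fderiv ℝ u p :=
    (hu.fderiv_right (m := 1) (by norm_num)).differentiable one_ne_zero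
  simp only [pdy, fun x => (hasDerivAt_pdy_s6 (hu.differentiable two_ne_zero) (x, y)).deriv]
  exact (hfderiv.comp (differentiable_id.prodMk (differentiable_const y))).clm_apply
    (differentiable_const _)

theorem pdy_eq_of_pdx_pdy_eq_zero {u : ℝ × ℝ → ℝ} (hu : ContDiff ℝ 2 u)
    (hwave : ∀ p, pdx (pdy u) p = 0) (a c y : ℝ) : pdy u (a, y) = pdy u (c, y) :=
  is_const_of_deriv_eq_zero (differentiable_pdy_left hu y) (fun x => hwave (x, y)) a c

/-- d'Alembert's rectangle rule. -/
theorem add_eq_add_of_pdx_pdy_eq_zero {u : ℝ × ℝ → ℝ} (hu : ContDiff ℝ 2 u)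
    (hwave : ∀ p, pdx (pdy u) p = 0) (a c b d : ℝ) :
    u (a, b) + u (c, d) = u (a, d) + u (c, b) := by
  have hu₁ : Differentiable ℝ u := hu.differentiable two_ne_zero
  have hdiff : Differentiable ℝ fun y => u (a, y) - u (c, y) := fun y =>
    (hasDerivAt_pdy_s6 hu₁ (a, y)).differentiableAt.sub (hasDerivAt_pdy_s6 hu₁ (c, y)).differentiableAt
  have hderiv : ∀ y, deriv (fun y => u (a, y) - u (c, y)) y = 0 := fun y => by
    rw [deriv_fun_sub (hasDerivAt_pdy_s6 hu₁ (a, y)).differentiableAt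
      (hasDerivAt_pdy_s6 hu₁ (c, y)).differentiableAt]
    exact sub_eq_zero.mpr (pdy_eq_of_pdx_pdy_eq_zero hu hwave a c y)
  linarith [is_const_of_deriv_eq_zero hdiff hderiv b d]

theorem wave_point_to_finite_set_reflection_general
    (s : ℝ → ℝ)
    (u : ℝ × ℝ → ℝ) (hu : ContDiff ℝ 2 u)
    (hwave : ∀ p : ℝ × ℝ, pdx (pdy u) p = 0)
    (huΓ : ∀ x : ℝ, u (x, s x) = 0) :
    ∀ x₀ y₀ : ℝ, ∀ m : ℕ, 1 ≤ m → ∀ t : ℕ → ℝ, s (t 0) = y₀ → t m = x₀ →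
      u (x₀, y₀) = -∑ k ∈ Finset.range m, u (t k, s (t (k + 1))) := by
  intro x₀ y₀ m _ t ht₀ htm
  have hstep : ∀ k, u (t k, s (t (k + 1))) = u (t k, s (t 0)) - u (t (k + 1), s (t 0)) := by
    intro k
    linarith [add_eq_add_of_pdx_pdy_eq_zero hu hwave (t k) (t (k + 1)) (s (t (k + 1))) (s (t 0)),
      huΓ (t (k + 1))]
  rw [Finset.sum_congr rfl fun k _ => hstep k,
    Finset.sum_range_sub' (fun k => u (t k, s (t 0))), huΓ, ht₀, htm]
  ring

/-- Point-to-finite-set reflection law for the wave equation in characteristic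
coordinates (`u_{xy} = 0`) with Dirichlet condition on the curve `Γ = {(x, s(x))}`:
`u(x₀, y₀) = -∑_{k=1}^{m} u(t_{k-1}, s(t_k))` for any staircase data `t₀, …, t_m`
with `s(t₀) = y₀` and `t_m = x₀`. -/
theorem wave_point_to_finite_set_reflection
    (s : ℝ → ℝ) (hsbij : Function.Bijective s)
    (u : ℝ × ℝ → ℝ) (hu : ContDiff ℝ 2 u)
    (hwave : ∀ p : ℝ × ℝ, pdx (pdy u) p = 0)
    (huΓ : ∀ x : ℝ, u (x, s x) = 0) :
    ∀ x₀ y₀ : ℝ, ∀ m : ℕ, 1 ≤ m → ∀ t : ℕ → ℝ, s (t 0) = y₀ → t m = x₀ →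
      u (x₀, y₀) = -∑ k ∈ Finset.range m, u (t k, s (t (k + 1))) :=
  wave_point_to_finite_set_reflection_general s u hu hwave huΓ
end

section
/- Let s : ℝ → ℝ be a C¹ strictly decreasing bijection and let u : ℝ² → ℝ be a C² function with u_{xy} = 0 at every point of ℝ² and with u(x, s(x)) = 0 for all x ∈ ℝ. Then for every (x₀, y₀) ∈ ℝ², u(x₀, y₀) = ½ ∫_{s⁻¹(y₀)}^{x₀} [uₓ(x, s(x)) − u_y(x, s(x)) · s′(x)] dx. -/
theorem fderiv_apply_eq_pdx_add_pdy {u : ℝ × ℝ → ℝ} {p : ℝ × ℝ} (hu : DifferentiableAt ℝ u p)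
    (v : ℝ × ℝ) : fderiv ℝ u p v = pdx u p * v.1 + pdy u p * v.2 := by
  have hx : HasDerivAt (fun x : ℝ => u (x, p.2)) (fderiv ℝ u p (1, 0)) p.1 :=
    hu.hasFDerivAt.comp_hasDerivAt_of_eq p.1
      ((hasDerivAt_id p.1).prodMk (hasDerivAt_const p.1 p.2)) rfl
  have hy : HasDerivAt (fun y : ℝ => u (p.1, y)) (fderiv ℝ u p (0, 1)) p.2 :=
    hu.hasFDerivAt.comp_hasDerivAt_of_eq p.2
      ((hasDerivAt_const p.2 p.1).prodMk (hasDerivAt_id p.2)) rfl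
  have hv : v = v.1 • ((1 : ℝ), (0 : ℝ)) + v.2 • ((0 : ℝ), (1 : ℝ)) := by ext <;> simp
  rw [pdx, pdy, hx.deriv, hy.deriv, hv, map_add, map_smul, map_smul]
  simp [smul_eq_mul, mul_comm]

theorem hasDerivAt_comp_prodMk {u : ℝ × ℝ → ℝ} {f g : ℝ → ℝ} {f' g' x : ℝ}
    (hu : DifferentiableAt ℝ u (f x, g x)) (hf : HasDerivAt f f' x) (hg : HasDerivAt g g' x) :
    HasDerivAt (fun t => u (f t, g t)) (pdx u (f x, g x) * f' + pdy u (f x, g x) * g') x := by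
  rw [← fderiv_apply_eq_pdx_add_pdy hu (f', g')]
  exact hu.hasFDerivAt.comp_hasDerivAt x (hf.prodMk hg)

theorem pdx_eq_neg_pdy_mul_deriv_of_eq_zero_on_graph {u : ℝ × ℝ → ℝ} {s : ℝ → ℝ}
    (hu : Differentiable ℝ u) (hs : Differentiable ℝ s) (huΓ : ∀ x, u (x, s x) = 0) (x : ℝ) :
    pdx u (x, s x) = -(pdy u (x, s x) * deriv s x) := by
  have hderiv := hasDerivAt_comp_prodMk (hu (x, s x)) (hasDerivAt_id x) (hs x).hasDerivAt
  have hzero : HasDerivAt (fun t => u (t, s t)) 0 x := by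
    simpa only [funext huΓ] using hasDerivAt_const x (0 : ℝ)
  have := hderiv.unique hzero
  simp only [id, mul_one] at this
  linarith

theorem eq_of_pdx_eq_zero {v : ℝ × ℝ → ℝ} (hv : Differentiable ℝ v) (h : ∀ p, pdx v p = 0)
    (x x' y : ℝ) : v (x, y) = v (x', y) :=
  is_const_of_deriv_eq_zero (hv.comp (differentiable_id.prodMk (differentiable_const y)))
    (fun t => h (t, y)) x x'

theorem contDiff_pdy_s7 {n : ℕ} {u : ℝ × ℝ → ℝ} (hu : ContDiff ℝ (n + 1) u) : ContDiff ℝ n (pdy u) := by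
  have hud : Differentiable ℝ u := hu.differentiable (by simp)
  have : pdy u = fun p => fderiv ℝ u p (0, 1) := by
    funext p
    simp [fderiv_apply_eq_pdx_add_pdy (hud p)]
  rw [this]
  exact (hu.fderiv_right (by simp)).clm_apply contDiff_const

theorem wave_riemann_representation_general
    (s : ℝ → ℝ) (hs : ContDiff ℝ 1 s)
    (hsbij : Function.Bijective s)
    (u : ℝ × ℝ → ℝ) (hu : ContDiff ℝ 2 u)
    (hwave : ∀ p : ℝ × ℝ, pdx (pdy u) p = 0)
    (huΓ : ∀ x : ℝ, u (x, s x) = 0) :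
    ∀ x₀ y₀ : ℝ,
      u (x₀, y₀) = (1 / 2) * ∫ x in (Function.invFun s y₀)..x₀,
        (pdx u (x, s x) - pdy u (x, s x) * deriv s x) := by
  intro x₀ y₀
  have hud : Differentiable ℝ u := hu.differentiable (by norm_num)
  have hsd : Differentiable ℝ s := hs.differentiable one_ne_zero
  have hpdy : ContDiff ℝ 1 (pdy u) := contDiff_pdy_s7 (n := 1) hu
  have hintegrand : ∀ x, pdx u (x, s x) - pdy u (x, s x) * deriv s x
      = -2 * (pdy u (x₀, s x) * deriv s x) := fun x => by
    rw [pdx_eq_neg_pdy_mul_deriv_of_eq_zero_on_graph hud hsd huΓ x,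
      eq_of_pdx_eq_zero (hpdy.differentiable one_ne_zero) hwave x x₀]
    ring
  have hprimitive : ∀ x, HasDerivAt (fun t => -2 * u (x₀, s t))
      (pdx u (x, s x) - pdy u (x, s x) * deriv s x) x := fun x => by
    simpa [hintegrand] using
      (hasDerivAt_comp_prodMk (hud _) (hasDerivAt_const x x₀) (hsd x).hasDerivAt).const_mul (-2)
  have hcont : Continuous fun x => pdx u (x, s x) - pdy u (x, s x) * deriv s x := by
    simp only [hintegrand]
    fun_prop (disch := exact hpdy.continuous)
  rw [intervalIntegral.integral_eq_sub_of_hasDerivAt (fun x _ => hprimitive x)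
    (hcont.intervalIntegrable _ _), Function.rightInverse_invFun hsbij.surjective y₀, huΓ x₀]
  ring

/-- Riemann's representation for the wave equation in characteristic coordinates
(`u_{xy} = 0`, Riemann function ≡ 1) with Dirichlet condition on `Γ = {(x, s(x))}`. -/
theorem wave_riemann_representation
    (s : ℝ → ℝ) (hs : ContDiff ℝ 1 s) (hsdec : StrictAnti s)
    (hsbij : Function.Bijective s)
    (u : ℝ × ℝ → ℝ) (hu : ContDiff ℝ 2 u)
    (hwave : ∀ p : ℝ × ℝ, pdx (pdy u) p = 0)
    (huΓ : ∀ x : ℝ, u (x, s x) = 0) :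
    ∀ x₀ y₀ : ℝ,
      u (x₀, y₀) = (1 / 2) * ∫ x in (Function.invFun s y₀)..x₀,
        (pdx u (x, s x) - pdy u (x, s x) * deriv s x) :=
  wave_riemann_representation_general s hs hsbij u hu hwave huΓ
end
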